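/- Suppose π is a probability tensor corresponding to a weakly hierarchical log-linear model θ, and assume C_θ^{(j)} ≠ ∅ for all j ∈ V. For a collection H = (H_1,…,H_p) of subsets H_j ⊆ I_j, say H ∈ ℋ if for every (E, i_E) with |E| ≥ 2 and θ_E(i_E) ≠ 0 there exists j ∈ E with i_j ∈ H_j. Then rnk⁺_P(π) ≤ min over H ∈ ℋ of ∏_{j∈V} ( |H_j| + 1 ). -/

import Mathlib

/-- A nonnegative PARAFAC decomposition with `m` terms. -/
def IsParafacDecomp {p : ℕ} {d : Fin p → ℕ}
    (M : ((j : Fin p) → Fin (d j)) → ℝ) (m : ℕ) : Prop :=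
  ∃ lam : Fin m → (j : Fin p) → Fin (d j) → ℝ,
    (∀ h j c, 0 ≤ lam h j c) ∧
    ∀ i : (j : Fin p) → Fin (d j), M i = ∑ h : Fin m, ∏ j : Fin p, lam h j (i j)

/-- The nonnegative PARAFAC rank. -/
noncomputable def parafacRank {p : ℕ} {d : Fin p → ℕ}
    (M : ((j : Fin p) → Fin (d j)) → ℝ) : ℕ :=
  sInf {m | IsParafacDecomp M m}

/-- The probability tensor of the log-linear model `θ`:
`π i = exp (∑_{E ⊆ V} θ_E(i_E))`, normalized so that the entries sum to one. -/
noncomputable def loglinTensor {p : ℕ} {d : Fin p → ℕ}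
    (θ : Finset (Fin p) → ((j : Fin p) → Fin (d j)) → ℝ) :
    ((j : Fin p) → Fin (d j)) → ℝ :=
  fun i => Real.exp (∑ E : Finset (Fin p), θ E i) /
    ∑ i' : (j : Fin p) → Fin (d j), Real.exp (∑ E : Finset (Fin p), θ E i')


/-!
Sort the cells by their levels in `H`: the class of a cell records, for each variable `j`, its
level if that lies in `H j` and "outside" otherwise. There are `∏ j, (|H j| + 1)` classes and each
is a box. On a class, a `θ E` whose `E` holds two variables outside their `H j` vanishes, by the
cover property and weak hierarchy; so every `θ E` depends on at most one coordinate there, the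
log-potential is additively separable, and `π` is a nonnegative rank-one tensor. Summing over
the classes gives a PARAFAC decomposition of the required length.
-/

open Finset Function

section AddSeparable

variable {ι : Type*} [Fintype ι] [DecidableEq ι] {α : ι → Type*}

def AddSeparableOn (g : (∀ j, α j) → ℝ) (B : Set (∀ j, α j)) : Prop :=
  ∀ i ∈ B, ∀ r ∈ B, g i = g r + ∑ j, (g (update r j (i j)) - g r)

theorem AddSeparableOn.finset_sum {κ : Type*} {s : Finset κ} {g : κ → (∀ j, α j) → ℝ}
    {B : Set (∀ j, α j)} (hg : ∀ E ∈ s, AddSeparableOn (g E) B) :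
    AddSeparableOn (fun i => ∑ E ∈ s, g E i) B := by
  intro i hi r hr
  dsimp only
  rw [sum_congr rfl fun E hE => hg E hE i hi r hr, sum_add_distrib, sum_comm]
  simp only [sum_sub_distrib]

theorem addSeparableOn_univ_pi {g : (∀ j, α j) → ℝ} {S : ∀ j, Set (α j)} (j₀ : ι)
    (hg : ∀ i ∈ Set.univ.pi S, ∀ i' ∈ Set.univ.pi S, i j₀ = i' j₀ → g i = g i') :
    AddSeparableOn g (Set.univ.pi S) := by
  intro i hi r hr
  have hupd : ∀ j, update r j (i j) ∈ Set.univ.pi S := fun j =>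
    (Set.update_mem_pi_iff_of_mem hr).2 fun _ => hi j trivial
  rw [Fintype.sum_eq_single j₀ fun j hj => sub_eq_zero.2 <|
      hg _ (hupd j) r hr (update_of_ne (Ne.symm hj) _ _),
    hg i hi _ (hupd j₀) (update_self j₀ _ r).symm]
  ring

theorem AddSeparableOn.exp_eq_mul_prod {g : (∀ j, α j) → ℝ} {B : Set (∀ j, α j)}
    (hg : AddSeparableOn g B) {i r : ∀ j, α j} (hi : i ∈ B) (hr : r ∈ B) :
    Real.exp (g i) = Real.exp (g r) * ∏ j, Real.exp (g (update r j (i j)) - g r) := by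
  rw [← Real.exp_sum, ← Real.exp_add, ← hg i hi r hr]

end AddSeparable

section RankOne

variable {ι : Type*} [Fintype ι] {α : ι → Type*}

def IsNonnegRankOneOn (M : (∀ j, α j) → ℝ) (B : Set (∀ j, α j)) : Prop :=
  ∃ u : ∀ j, α j → ℝ, (∀ j c, 0 ≤ u j c) ∧ ∀ i ∈ B, M i = ∏ j, u j (i j)

theorem IsNonnegRankOneOn.const_mul [Nonempty ι] {M : (∀ j, α j) → ℝ} {B : Set (∀ j, α j)}
    {a : ℝ} (ha : 0 ≤ a) (hM : IsNonnegRankOneOn M B) :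
    IsNonnegRankOneOn (fun i => a * M i) B := by
  classical
  obtain ⟨u, hu, hMu⟩ := hM
  let j₀ : ι := Classical.arbitrary ι
  refine ⟨fun j c => Pi.mulSingle (M := fun _ => ℝ) j₀ a j * u j c, fun j c => ?_, fun i hi => ?_⟩
  · dsimp only
    rw [Pi.mulSingle_apply]
    split_ifs <;> positivity [hu j c]
  · dsimp only
    rw [prod_mul_distrib, Fintype.prod_pi_mulSingle', hMu i hi]

end RankOne

def classBox {ι : Type*} {α κ : ι → Type*} (τ : ∀ j, α j → κ j) (h : ∀ j, κ j) :
    Set (∀ j, α j) :=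
  Set.univ.pi fun j => τ j ⁻¹' {h j}

theorem mem_classBox {ι : Type*} {α κ : ι → Type*} {τ : ∀ j, α j → κ j} {h : ∀ j, κ j}
    {i : ∀ j, α j} : i ∈ classBox τ h ↔ ∀ j, τ j (i j) = h j := by
  simp [classBox]

section Parafac

variable {p : ℕ} {d : Fin p → ℕ}

theorem parafacRank_le {M : ((j : Fin p) → Fin (d j)) → ℝ} {m : ℕ}
    (hM : IsParafacDecomp M m) : parafacRank M ≤ m :=
  Nat.sInf_le hM

theorem isParafacDecomp_of_sum {M : ((j : Fin p) → Fin (d j)) → ℝ} {κ : Type*} [Fintype κ]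
    (u : κ → (j : Fin p) → Fin (d j) → ℝ) (hu : ∀ h j c, 0 ≤ u h j c)
    (hM : ∀ i, M i = ∑ h, ∏ j, u h j (i j)) : IsParafacDecomp M (Fintype.card κ) := by
  let e := Fintype.equivFin κ
  refine ⟨fun t => u (e.symm t), fun t => hu _, fun i => ?_⟩
  rw [hM i, ← e.symm.sum_comp]

theorem isParafacDecomp_of_isNonnegRankOneOn {M : ((j : Fin p) → Fin (d j)) → ℝ}
    {κ : Fin p → Type*} [∀ j, Fintype (κ j)] (τ : ∀ j, Fin (d j) → κ j)
    (hM : ∀ h : ∀ j, κ j, IsNonnegRankOneOn M (classBox τ h)) :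
    IsParafacDecomp M (∏ j, Fintype.card (κ j)) := by
  classical
  choose u hu hMu using hM
  rw [← Fintype.card_pi]
  refine isParafacDecomp_of_sum (fun h j c => if τ j c = h j then u h j c else 0)
    (fun h j c => by split_ifs <;> simp [hu]) fun i => ?_
  rw [Fintype.sum_eq_single (fun j => τ j (i j)), hMu _ i (mem_classBox.2 fun _ => rfl)]
  · simp
  · intro h hh
    obtain ⟨j, hj⟩ := Function.ne_iff.1 hh
    exact prod_eq_zero (mem_univ j) (if_neg (Ne.symm hj))

end Parafac

section CoverClass

variable {β : Type*} [DecidableEq β]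

def coverClass (s : Finset β) (c : β) : Option s :=
  if hc : c ∈ s then some ⟨c, hc⟩ else none

theorem coverClass_eq_none_iff {s : Finset β} {c : β} : coverClass s c = none ↔ c ∉ s := by
  unfold coverClass
  split_ifs <;> simpa

theorem eq_or_coverClass_eq_none_of_coverClass_eq {s : Finset β} {c c' : β}
    (h : coverClass s c = coverClass s c') : c = c' ∨ coverClass s c = none := by
  unfold coverClass at *
  split_ifs at * <;> simp_all

end CoverClass

section LogLinear

variable {ι : Type*} [DecidableEq ι] {α : ι → Type*}

def IsWeaklyHierarchical (θ : Finset ι → (∀ j, α j) → ℝ) : Prop :=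
  ∀ (E F : Finset ι) (i i' : ∀ j, α j), E ⊆ F → θ E i = 0 → (∀ j ∈ E, i' j = i j) → θ F i' = 0

/-- `H ∈ ℋ`: every nonzero interaction of order at least two involves a level in `H`. -/
def IsInteractionCover (θ : Finset ι → (∀ j, α j) → ℝ) (H : ∀ j, Finset (α j)) : Prop :=
  ∀ (E : Finset ι) (i : ∀ j, α j), 2 ≤ E.card → θ E i ≠ 0 → ∃ j ∈ E, i j ∈ H j

variable {θ : Finset ι → (∀ j, α j) → ℝ} {H : ∀ j, Finset (α j)}

theorem IsWeaklyHierarchical.eq_zero_of_not_mem_cover (hwh : IsWeaklyHierarchical θ)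
    (hH : IsInteractionCover θ H) {E : Finset ι} {x : ∀ j, α j} {j₁ j₂ : ι} (h₁ : j₁ ∈ E)
    (h₂ : j₂ ∈ E) (hne : j₁ ≠ j₂) (hx₁ : x j₁ ∉ H j₁) (hx₂ : x j₂ ∉ H j₂) : θ E x = 0 := by
  refine hwh {j₁, j₂} E x x (insert_subset h₁ (singleton_subset_iff.2 h₂)) ?_ fun _ _ => rfl
  by_contra hθ
  obtain ⟨j, hj, hjH⟩ := hH _ x (card_pair hne).ge hθ
  obtain rfl | rfl : j = j₁ ∨ j = j₂ := by simpa using hj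
  all_goals contradiction

variable [∀ j, DecidableEq (α j)]

/-- Two coordinates of `E` outside `H` kill `θ E`, and the coordinates inside `H` are fixed on
the class. -/
theorem exists_forall_eq_on_coverClass [Nonempty ι] (hdep : ∀ E, DependsOn (θ E) E)
    (hwh : IsWeaklyHierarchical θ) (hH : IsInteractionCover θ H) (E : Finset ι)
    (h : ∀ j, Option (H j)) :
    ∃ j₀, ∀ i ∈ classBox (fun j => coverClass (H j)) h,
      ∀ i' ∈ classBox (fun j => coverClass (H j)) h, i j₀ = i' j₀ → θ E i = θ E i' := by
  have hnone : ∀ {i j}, i ∈ classBox (fun j => coverClass (H j)) h → h j = none →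
      i j ∉ H j := fun hi hj => coverClass_eq_none_iff.1 ((mem_classBox.1 hi _).trans hj)
  by_cases htwo : ∃ j₁ ∈ E, ∃ j₂ ∈ E, j₁ ≠ j₂ ∧ h j₁ = none ∧ h j₂ = none
  · obtain ⟨j₁, h₁, j₂, h₂, hne, hn₁, hn₂⟩ := htwo
    refine ⟨j₁, fun i hi i' hi' _ => ?_⟩
    rw [hwh.eq_zero_of_not_mem_cover hH h₁ h₂ hne (hnone hi hn₁) (hnone hi hn₂),
      hwh.eq_zero_of_not_mem_cover hH h₁ h₂ hne (hnone hi' hn₁) (hnone hi' hn₂)]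
  push Not at htwo
  obtain ⟨j₀, hj₀⟩ : ∃ j₀, ∀ k ∈ E, h k = none → k = j₀ := by
    by_cases hfree : ∃ j ∈ E, h j = none
    · obtain ⟨j, hj, hjn⟩ := hfree
      exact ⟨j, fun k hk hkn => by_contra fun hkj => htwo k hk j hj hkj hkn hjn⟩
    · exact ⟨Classical.arbitrary ι, fun k hk hkn => (hfree ⟨k, hk, hkn⟩).elim⟩
  refine ⟨j₀, fun i hi i' hi' h0 => hdep E fun k hk => ?_⟩
  have hclass : coverClass (H k) (i k) = coverClass (H k) (i' k) :=
    (mem_classBox.1 hi k).trans (mem_classBox.1 hi' k).symm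
  rcases eq_or_coverClass_eq_none_of_coverClass_eq hclass with heq | hn
  · exact heq
  · rw [hj₀ k hk ((mem_classBox.1 hi k).symm.trans hn)]
    exact h0

theorem addSeparableOn_sum_coverClass [Fintype ι] [Nonempty ι]
    (hdep : ∀ E, DependsOn (θ E) E) (hwh : IsWeaklyHierarchical θ) (hH : IsInteractionCover θ H)
    (h : ∀ j, Option (H j)) :
    AddSeparableOn (fun i => ∑ E, θ E i) (classBox (fun j => coverClass (H j)) h) :=
  AddSeparableOn.finset_sum fun E _ =>
    let ⟨j₀, hj₀⟩ := exists_forall_eq_on_coverClass hdep hwh hH E h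
    addSeparableOn_univ_pi j₀ hj₀

end LogLinear

theorem isNonnegRankOneOn_loglinTensor {p : ℕ} {d : Fin p → ℕ}
    {θ : Finset (Fin p) → ((j : Fin p) → Fin (d j)) → ℝ} {H : (j : Fin p) → Finset (Fin (d j))}
    (hdep : ∀ E, DependsOn (θ E) E) (hwh : IsWeaklyHierarchical θ) (hH : IsInteractionCover θ H)
    (h : (j : Fin p) → Option (H j)) :
    IsNonnegRankOneOn (loglinTensor θ) (classBox (fun j => coverClass (H j)) h) := by
  rcases isEmpty_or_nonempty (Fin p) with _ | _
  · refine ⟨0, fun _ _ => le_rfl, fun i _ => ?_⟩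
    simp [loglinTensor, Subsingleton.elim _ i, Real.exp_ne_zero]
  rcases (classBox (fun j => coverClass (H j)) h).eq_empty_or_nonempty with hB | ⟨r, hr⟩
  · exact ⟨0, fun _ _ => le_rfl, by simp [hB]⟩
  set g := fun i => ∑ E, θ E i
  set Z := ∑ i', Real.exp (g i')
  have hprod : IsNonnegRankOneOn (fun i => ∏ j, Real.exp (g (update r j (i j)) - g r)) Set.univ :=
    ⟨fun j c => Real.exp (g (update r j c) - g r), fun _ _ => (Real.exp_pos _).le, fun _ _ => rfl⟩
  obtain ⟨u, hu, hgu⟩ := hprod.const_mul (a := Real.exp (g r) / Z) (by positivity)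
  refine ⟨u, hu, fun i hi => ?_⟩
  rw [← hgu i trivial, loglinTensor,
    (addSeparableOn_sum_coverClass hdep hwh hH h).exp_eq_mul_prod hi hr]
  ring

theorem parafacRank_le_cover_bound_general {p : ℕ} {d : Fin p → ℕ}
    (θ : Finset (Fin p) → ((j : Fin p) → Fin (d j)) → ℝ)
    (hdep : ∀ (E : Finset (Fin p)) (i i' : (j : Fin p) → Fin (d j)),
      (∀ j ∈ E, i j = i' j) → θ E i = θ E i')
    (hwh : ∀ (E F : Finset (Fin p)) (i i' : (j : Fin p) → Fin (d j)),
      E ⊆ F → θ E i = 0 → (∀ j ∈ E, i' j = i j) → θ F i' = 0)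
    (H : (j : Fin p) → Finset (Fin (d j)))
    (hH : ∀ (E : Finset (Fin p)) (i : (j : Fin p) → Fin (d j)),
      2 ≤ E.card → θ E i ≠ 0 → ∃ j ∈ E, i j ∈ H j) :
    parafacRank (loglinTensor θ) ≤ ∏ j : Fin p, ((H j).card + 1) := by
  have hdecomp := isParafacDecomp_of_isNonnegRankOneOn (fun j => coverClass (H j))
    (isNonnegRankOneOn_loglinTensor hdep hwh hH)
  simpa using parafacRank_le hdecomp

/-- First part of Theorem 2: if `π` is the probability tensor of a weakly hierarchical
log-linear model `θ` in which every variable shares a nonzero two-way interaction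
(`C_θ^{(j)} ≠ ∅` for all `j`), then for every collection `H = (H_1,…,H_p)` of level sets
covering all nonzero interactions of order at least two (`H ∈ ℋ`), the nonnegative
PARAFAC rank of `π` is at most `∏_{j ∈ V} (|H_j| + 1)`.  (Hence the rank is at most the
minimum of this bound over `H ∈ ℋ`.) -/
theorem parafacRank_le_cover_bound {p : ℕ} {d : Fin p → ℕ}
    (θ : Finset (Fin p) → ((j : Fin p) → Fin (d j)) → ℝ)
    (hdep : ∀ (E : Finset (Fin p)) (i i' : (j : Fin p) → Fin (d j)),
      (∀ j ∈ E, i j = i' j) → θ E i = θ E i')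
    (hwh : ∀ (E F : Finset (Fin p)) (i i' : (j : Fin p) → Fin (d j)),
      E ⊆ F → θ E i = 0 → (∀ j ∈ E, i' j = i j) → θ F i' = 0)
    (hC : ∀ j : Fin p, ∃ j' : Fin p, j' ≠ j ∧
      ∃ x : (k : Fin p) → Fin (d k), θ {j, j'} x ≠ 0)
    (H : (j : Fin p) → Finset (Fin (d j)))
    (hH : ∀ (E : Finset (Fin p)) (i : (j : Fin p) → Fin (d j)),
      2 ≤ E.card → θ E i ≠ 0 → ∃ j ∈ E, i j ∈ H j) :
    parafacRank (loglinTensor θ) ≤ ∏ j : Fin p, ((H j).card + 1) :=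
  parafacRank_le_cover_bound_general θ hdep hwh H hH
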